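/- Let V be a cartesian closed, complete and cocomplete category (with its cartesian monoidal structure ×), and let a, b, c, d be objects of the arrow category [→,V], which carries the componentwise cartesian product × and the funny tensor □. Then the interchange morphism ζ_{a,b,c,d} : (a×b)□(c×d) → (a□c)×(b□d), defined out of the defining pushout of (a×b)□(c×d) by the coherence isomorphisms (a_i×b_i)×(c_j×d_j) ≅ (a_i×c_j)×(b_i×d_j) of V, is equal to the morphism ⟨π□π, π'□π'⟩ into the product (a□c)×(b□d) induced by the first and second projections; consequently ζ_{a,b,c,d} is natural in a, b, c and d. -/

import Mathlib

open CategoryTheory Category Limits MonoidalCategory CartesianMonoidalCategory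
  SemiCartesianMonoidalCategory

universe v u
variable {V : Type u} [Category.{v} V] [CartesianMonoidalCategory V] [MonoidalClosed V]
  [HasLimits V] [HasColimits V]

/-- The funny tensor of two objects of the arrow category `[→,V]` (here `⊗ = ×` is the chosen
cartesian product of `V`): the diagonal of the pushout of `a₀ ◁ b_⋄ : a₀ × b₀ ⟶ a₀ × b₁` and
`a_⋄ ▷ b₀ : a₀ × b₀ ⟶ a₁ × b₀`. -/
noncomputable def funny (a b : Arrow V) : Arrow V :=
  Arrow.mk ((a.left ◁ b.hom) ≫ pushout.inl (a.left ◁ b.hom) (a.hom ▷ b.left))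

/-- The componentwise cartesian product on `[→,V]`. -/
noncomputable def parrow (a b : Arrow V) : Arrow V :=
  Arrow.mk (MonoidalCategory.tensorHom a.hom b.hom)

/-- The first projection `a × b ⟶ a` in `[→,V]`. -/
noncomputable def pfst (a b : Arrow V) : parrow a b ⟶ a :=
  Arrow.homMk (u := fst a.left b.left) (v := fst a.right b.right)
    (by simp [parrow, tensorHom_fst])

/-- The second projection `a × b ⟶ b` in `[→,V]`. -/
noncomputable def psnd (a b : Arrow V) : parrow a b ⟶ b :=
  Arrow.homMk (u := snd a.left b.left) (v := snd a.right b.right)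
    (by simp [parrow, tensorHom_snd])

/-- Pairing `⟨f, g⟩` into the componentwise product of `[→,V]`. -/
noncomputable def pairArrow {x a c : Arrow V} (f : x ⟶ a) (g : x ⟶ c) : x ⟶ parrow a c :=
  Arrow.homMk (u := lift f.left g.left) (v := lift f.right g.right)
    (by apply CartesianMonoidalCategory.hom_ext <;> simp [parrow, tensorHom_fst, tensorHom_snd, Arrow.w])

/-- The functorial action `f × g` of the componentwise product on `[→,V]`. -/
noncomputable def parrowMap {a b c d : Arrow V} (f : a ⟶ c) (g : b ⟶ d) :
    parrow a b ⟶ parrow c d :=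
  Arrow.homMk (u := MonoidalCategory.tensorHom f.left g.left)
    (v := MonoidalCategory.tensorHom f.right g.right)
    (by apply CartesianMonoidalCategory.hom_ext <;> simp [parrow, tensorHom_fst, tensorHom_snd, Arrow.w])

/-- The middle-four interchange coherence isomorphism `(X₁×X₂)×(X₃×X₄) ⟶ (X₁×X₃)×(X₂×X₄)`
of `V`. -/
noncomputable def mid4 (X₁ X₂ X₃ X₄ : V) :
    (X₁ ⊗ X₂) ⊗ (X₃ ⊗ X₄) ⟶ (X₁ ⊗ X₃) ⊗ (X₂ ⊗ X₄) :=
  lift (MonoidalCategory.tensorHom (fst X₁ X₂) (fst X₃ X₄))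
    (MonoidalCategory.tensorHom (snd X₁ X₂) (snd X₃ X₄))

/-- `IsFunnyMap fm` says that `fm` is the functorial action of the funny tensor on morphisms:
its components are induced on the defining pushouts by the products of the components. -/
def IsFunnyMap
    (fm : ∀ {a b c d : Arrow V}, (a ⟶ c) → (b ⟶ d) → (funny a b ⟶ funny c d)) : Prop :=
  ∀ {a b c d : Arrow V} (f : a ⟶ c) (g : b ⟶ d),
    ((fm f g).left = MonoidalCategory.tensorHom f.left g.left) ∧
    (pushout.inl (a.left ◁ b.hom) (a.hom ▷ b.left) ≫ (fm f g).right
      = MonoidalCategory.tensorHom f.left g.right ≫ pushout.inl (c.left ◁ d.hom) (c.hom ▷ d.left)) ∧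
    (pushout.inr (a.left ◁ b.hom) (a.hom ▷ b.left) ≫ (fm f g).right
      = MonoidalCategory.tensorHom f.right g.left ≫ pushout.inr (c.left ◁ d.hom) (c.hom ▷ d.left))

lemma whisk_left_exch {a b c d : Arrow V} (f : a ⟶ c) (g : b ⟶ d) :
    (a.left ◁ b.hom) ≫ (f.left ⊗ₘ g.right) = (f.left ⊗ₘ g.left) ≫ (c.left ◁ d.hom) := by
  apply CartesianMonoidalCategory.hom_ext <;>
    simp [tensorHom_fst, tensorHom_snd, whiskerLeft_fst, whiskerLeft_snd, Arrow.w]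

lemma whisk_right_exch {a b c d : Arrow V} (f : a ⟶ c) (g : b ⟶ d) :
    (a.hom ▷ b.left) ≫ (f.right ⊗ₘ g.left) = (f.left ⊗ₘ g.left) ≫ (c.hom ▷ d.left) := by
  apply CartesianMonoidalCategory.hom_ext <;>
    simp [tensorHom_fst, tensorHom_snd, whiskerRight_fst, whiskerRight_snd, Arrow.w]

/-- The functorial action of the funny tensor on morphisms. -/
noncomputable def funnyMap {a b c d : Arrow V} (f : a ⟶ c) (g : b ⟶ d) :
    funny a b ⟶ funny c d :=
  Arrow.homMk (u := MonoidalCategory.tensorHom f.left g.left)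
    (v := pushout.desc
      ((f.left ⊗ₘ g.right) ≫ pushout.inl (c.left ◁ d.hom) (c.hom ▷ d.left))
      ((f.right ⊗ₘ g.left) ≫ pushout.inr (c.left ◁ d.hom) (c.hom ▷ d.left))
      (by erw [reassoc_of% whisk_left_exch f g, reassoc_of% whisk_right_exch f g,
            pushout.condition]; rfl))
    (by
      show (f.left ⊗ₘ g.left) ≫ (c.left ◁ d.hom) ≫ _ = ((a.left ◁ b.hom) ≫ pushout.inl _ _) ≫ _
      erw [assoc, pushout.inl_desc, reassoc_of% whisk_left_exch f g])

@[simp] lemma funnyMap_left {a b c d : Arrow V} (f : a ⟶ c) (g : b ⟶ d) :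
    (funnyMap f g).left = MonoidalCategory.tensorHom f.left g.left := rfl

@[simp] lemma funnyMap_inl {a b c d : Arrow V} (f : a ⟶ c) (g : b ⟶ d) :
    pushout.inl (a.left ◁ b.hom) (a.hom ▷ b.left) ≫ (funnyMap f g).right
      = (f.left ⊗ₘ g.right) ≫ pushout.inl (c.left ◁ d.hom) (c.hom ▷ d.left) :=
  pushout.inl_desc _ _ _

@[simp] lemma funnyMap_inr {a b c d : Arrow V} (f : a ⟶ c) (g : b ⟶ d) :
    pushout.inr (a.left ◁ b.hom) (a.hom ▷ b.left) ≫ (funnyMap f g).right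
      = (f.right ⊗ₘ g.left) ≫ pushout.inr (c.left ◁ d.hom) (c.hom ▷ d.left) :=
  pushout.inr_desc _ _ _

@[simp] lemma funnyMap_inl_assoc {a b c d : Arrow V} (f : a ⟶ c) (g : b ⟶ d)
    {Z : V} (h : (funny c d).right ⟶ Z) :
    pushout.inl (a.left ◁ b.hom) (a.hom ▷ b.left) ≫ (funnyMap f g).right ≫ h
      = (f.left ⊗ₘ g.right) ≫ pushout.inl (c.left ◁ d.hom) (c.hom ▷ d.left) ≫ h := by
  erw [← assoc, funnyMap_inl, assoc]; rfl

@[simp] lemma funnyMap_inr_assoc {a b c d : Arrow V} (f : a ⟶ c) (g : b ⟶ d)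
    {Z : V} (h : (funny c d).right ⟶ Z) :
    pushout.inr (a.left ◁ b.hom) (a.hom ▷ b.left) ≫ (funnyMap f g).right ≫ h
      = (f.right ⊗ₘ g.left) ≫ pushout.inr (c.left ◁ d.hom) (c.hom ▷ d.left) ≫ h := by
  erw [← assoc, funnyMap_inr, assoc]; rfl

@[simp] lemma pairArrow_left' {x a c : Arrow V} (f : x ⟶ a) (g : x ⟶ c) :
    (pairArrow f g).left = lift f.left g.left := rfl

@[simp] lemma pairArrow_right' {x a c : Arrow V} (f : x ⟶ a) (g : x ⟶ c) :
    (pairArrow f g).right = lift f.right g.right := rfl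

@[simp] lemma pfst_left' (a b : Arrow V) : (pfst a b).left = fst a.left b.left := rfl

@[simp] lemma pfst_right' (a b : Arrow V) : (pfst a b).right = fst a.right b.right := rfl

@[simp] lemma psnd_left' (a b : Arrow V) : (psnd a b).left = snd a.left b.left := rfl

@[simp] lemma psnd_right' (a b : Arrow V) : (psnd a b).right = snd a.right b.right := rfl

@[simp] lemma parrowMap_left' {a b c d : Arrow V} (f : a ⟶ c) (g : b ⟶ d) :
    (parrowMap f g).left = (f.left ⊗ₘ g.left) := rfl

@[simp] lemma parrowMap_right' {a b c d : Arrow V} (f : a ⟶ c) (g : b ⟶ d) :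
    (parrowMap f g).right = (f.right ⊗ₘ g.right) := rfl

lemma funnyMap_inl_par {a b c d X Y : Arrow V} (f : parrow a b ⟶ X) (g : parrow c d ⟶ Y) :
    pushout.inl ((a.left ⊗ b.left) ◁ (c.hom ⊗ₘ d.hom)) ((a.hom ⊗ₘ b.hom) ▷ (c.left ⊗ d.left))
      ≫ (funnyMap f g).right
      = (f.left ⊗ₘ g.right) ≫ pushout.inl (X.left ◁ Y.hom) (X.hom ▷ Y.left) :=
  funnyMap_inl f g

lemma funnyMap_inr_par {a b c d X Y : Arrow V} (f : parrow a b ⟶ X) (g : parrow c d ⟶ Y) :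
    pushout.inr ((a.left ⊗ b.left) ◁ (c.hom ⊗ₘ d.hom)) ((a.hom ⊗ₘ b.hom) ▷ (c.left ⊗ d.left))
      ≫ (funnyMap f g).right
      = (f.right ⊗ₘ g.left) ≫ pushout.inr (X.left ◁ Y.hom) (X.hom ▷ Y.left) :=
  funnyMap_inr f g

lemma funnyMap_inl_par_assoc {a b c d X Y : Arrow V} (f : parrow a b ⟶ X) (g : parrow c d ⟶ Y)
    {Z : V} (h : (funny X Y).right ⟶ Z) :
    pushout.inl ((a.left ⊗ b.left) ◁ (c.hom ⊗ₘ d.hom)) ((a.hom ⊗ₘ b.hom) ▷ (c.left ⊗ d.left))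
      ≫ (funnyMap f g).right ≫ h
      = (f.left ⊗ₘ g.right) ≫ pushout.inl (X.left ◁ Y.hom) (X.hom ▷ Y.left) ≫ h :=
  funnyMap_inl_assoc f g h

lemma funnyMap_inr_par_assoc {a b c d X Y : Arrow V} (f : parrow a b ⟶ X) (g : parrow c d ⟶ Y)
    {Z : V} (h : (funny X Y).right ⟶ Z) :
    pushout.inr ((a.left ⊗ b.left) ◁ (c.hom ⊗ₘ d.hom)) ((a.hom ⊗ₘ b.hom) ▷ (c.left ⊗ d.left))
      ≫ (funnyMap f g).right ≫ h
      = (f.right ⊗ₘ g.left) ≫ pushout.inr (X.left ◁ Y.hom) (X.hom ▷ Y.left) ≫ h :=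
  funnyMap_inr_assoc f g h

/-- the interchange morphism `ζ_{a,b,c,d} : (a×b)□(c×d) ⟶ (a□c)×(b□d)`, defined
out of the defining pushout of `(a×b)□(c×d)` by the middle-four coherence isomorphisms of `V`,
is equal to the pairing `⟨π□π, π'□π'⟩` induced by the projections; consequently it is natural
in `a`, `b`, `c` and `d`. -/
theorem stmt_7 :
    ∃ fm : ∀ {a b c d : Arrow V}, (a ⟶ c) → (b ⟶ d) → (funny a b ⟶ funny c d),
      IsFunnyMap fm ∧
      ∃ ζ : ∀ a b c d : Arrow V, funny (parrow a b) (parrow c d) ⟶ parrow (funny a c) (funny b d),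
        -- ζ is defined out of the pushout by the middle-four coherence isomorphisms
        (∀ a b c d : Arrow V, (ζ a b c d).left = mid4 a.left b.left c.left d.left) ∧
        (∀ a b c d : Arrow V,
          pushout.inl ((parrow a b).left ◁ (parrow c d).hom) ((parrow a b).hom ▷ (parrow c d).left)
              ≫ (ζ a b c d).right
            = mid4 a.left b.left c.right d.right ≫
                MonoidalCategory.tensorHom
                  (pushout.inl (a.left ◁ c.hom) (a.hom ▷ c.left))
                  (pushout.inl (b.left ◁ d.hom) (b.hom ▷ d.left))) ∧
        (∀ a b c d : Arrow V,
          pushout.inr ((parrow a b).left ◁ (parrow c d).hom) ((parrow a b).hom ▷ (parrow c d).left)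
              ≫ (ζ a b c d).right
            = mid4 a.right b.right c.left d.left ≫
                MonoidalCategory.tensorHom
                  (pushout.inr (a.left ◁ c.hom) (a.hom ▷ c.left))
                  (pushout.inr (b.left ◁ d.hom) (b.hom ▷ d.left))) ∧
        -- ζ equals the pairing of the two projections tensored under □
        (∀ a b c d : Arrow V,
          ζ a b c d = pairArrow (fm (pfst a b) (pfst c d)) (fm (psnd a b) (psnd c d))) ∧
        -- consequently ζ is natural in a, b, c and d
        (∀ (a b c d a' b' c' d' : Arrow V) (fa : a ⟶ a') (fb : b ⟶ b') (fc : c ⟶ c')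
            (fd : d ⟶ d'),
          fm (parrowMap fa fb) (parrowMap fc fd) ≫ ζ a' b' c' d'
            = ζ a b c d ≫ parrowMap (fm fa fc) (fm fb fd)) := by
  refine ⟨@funnyMap V _ _ _ _ _, fun f g => ⟨rfl, funnyMap_inl f g, funnyMap_inr f g⟩,
    fun a b c d => pairArrow (funnyMap (pfst a b) (pfst c d)) (funnyMap (psnd a b) (psnd c d)),
    ?_, ?_, ?_, fun _ _ _ _ => rfl, ?_⟩
  · intro a b c d
    rfl
  · intro a b c d
    apply CartesianMonoidalCategory.hom_ext
    · simp only [funnyMap_inl, funnyMap_inr, funnyMap_inl_assoc, funnyMap_inr_assoc, funnyMap_left, pairArrow_left', pairArrow_right', pfst_left', pfst_right', psnd_left', psnd_right', parrowMap_left', parrowMap_right', mid4, assoc, comp_lift, lift_fst, lift_snd, lift_fst_assoc, lift_snd_assoc, tensorHom_comp_tensorHom, tensorHom_comp_tensorHom_assoc] <;> dsimp only [funny, parrow, Arrow.mk_left, Arrow.mk_right, Functor.id_obj] <;> simp [parrow, funny, funnyMap_inl_par, funnyMap_inr_par, funnyMap_inl_par_assoc, funnyMap_inr_par_assoc, funnyMap_inl,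 funnyMap_inr, funnyMap_inl_assoc, funnyMap_inr_assoc, funnyMap_left, pairArrow_left', pairArrow_right', pfst_left', pfst_right', psnd_left', psnd_right', parrowMap_left', parrowMap_right', mid4]
      exact funnyMap_inl (pfst a b) (pfst c d)
    · simp only [funnyMap_inl, funnyMap_inr, funnyMap_inl_assoc, funnyMap_inr_assoc, funnyMap_left, pairArrow_left', pairArrow_right', pfst_left', pfst_right', psnd_left', psnd_right', parrowMap_left', parrowMap_right', mid4, assoc, comp_lift, lift_fst, lift_snd, lift_fst_assoc, lift_snd_assoc, tensorHom_comp_tensorHom, tensorHom_comp_tensorHom_assoc] <;> dsimp only [funny, parrow, Arrow.mk_left, Arrow.mk_right, Functor.id_obj] <;> simp [parrow, funny, funnyMap_inl_par, funnyMap_inr_par, funnyMap_inl_par_assoc, funnyMap_inr_par_assoc, funnyMap_inl, funnyMap_inr, funnyMap_inl_assoc, funnyMap_inr_assoc, funnyMap_left, pairArrow_left', pairArrow_right', pfst_left', pfst_right', psnd_left', psnd_right', parrowMap_left', parrowMap_right', mid4]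
      exact funnyMap_inl (psnd a b) (psnd c d)
  · intro a b c d
    apply CartesianMonoidalCategory.hom_ext
    · simp only [funnyMap_inl, funnyMap_inr, funnyMap_inl_assoc, funnyMap_inr_assoc, funnyMap_left, pairArrow_left', pairArrow_right', pfst_left', pfst_right', psnd_left', psnd_right', parrowMap_left', parrowMap_right', mid4, assoc, comp_lift, lift_fst, lift_snd, lift_fst_assoc, lift_snd_assoc, tensorHom_comp_tensorHom, tensorHom_comp_tensorHom_assoc] <;> dsimp only [funny, parrow, Arrow.mk_left, Arrow.mk_right, Functor.id_obj] <;> simp [parrow, funny, funnyMap_inl_par, funnyMap_inr_par, funnyMap_inl_par_assoc, funnyMap_inr_par_assoc, funnyMap_inl, funnyMap_inr, funnyMap_inl_assoc, funnyMap_inr_assoc, funnyMap_left, pairArrow_left', pairArrow_right', pfst_left', pfst_right', psnd_left', psnd_right', parrowMap_left', parrowMap_right', mid4]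
      exact funnyMap_inr (pfst a b) (pfst c d)
    · simp only [funnyMap_inl, funnyMap_inr, funnyMap_inl_assoc, funnyMap_inr_assoc, funnyMap_left, pairArrow_left', pairArrow_right', pfst_left', pfst_right', psnd_left', psnd_right', parrowMap_left', parrowMap_right', mid4, assoc, comp_lift, lift_fst, lift_snd, lift_fst_assoc, lift_snd_assoc, tensorHom_comp_tensorHom, tensorHom_comp_tensorHom_assoc] <;> dsimp only [funny, parrow, Arrow.mk_left, Arrow.mk_right, Functor.id_obj] <;> simp [parrow, funny, funnyMap_inl_par, funnyMap_inr_par, funnyMap_inl_par_assoc, funnyMap_inr_par_assoc, funnyMap_inl, funnyMap_inr, funnyMap_inl_assoc, funnyMap_inr_assoc, funnyMap_left, pairArrow_left', pairArrow_right', pfst_left', pfst_right', psnd_left', psnd_right', parrowMap_left', parrowMap_right', mid4]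
      exact funnyMap_inr (psnd a b) (psnd c d)
  · intro a b c d a' b' c' d' fa fb fc fd
    apply Arrow.hom_ext
    · rw [Arrow.comp_left, Arrow.comp_left]
      apply CartesianMonoidalCategory.hom_ext <;> apply CartesianMonoidalCategory.hom_ext <;>
        simp only [funnyMap_inl, funnyMap_inr, funnyMap_inl_assoc, funnyMap_inr_assoc, funnyMap_left, pairArrow_left', pairArrow_right', pfst_left', pfst_right', psnd_left', psnd_right', parrowMap_left', parrowMap_right', mid4, assoc, comp_lift, lift_fst, lift_snd, lift_fst_assoc, lift_snd_assoc, tensorHom_comp_tensorHom, tensorHom_comp_tensorHom_assoc] <;> dsimp only [funny, parrow, Arrow.mk_left, Arrow.mk_right, Functor.id_obj] <;> simp [parrow, funny, funnyMap_inl_par, funnyMap_inr_par, funnyMap_inl_par_assoc, funnyMap_inr_par_assoc, funnyMap_inl, funnyMap_inr, funnyMap_inl_assoc, funnyMap_inr_assoc, funnyMap_left, pairArrow_left', pairArrow_right', pfst_left', pfst_right', psnd_left', psnd_right', parrowMap_left', parrowMap_right', mid4]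
    · rw [Arrow.comp_right, Arrow.comp_right]
      apply pushout.hom_ext
      · apply CartesianMonoidalCategory.hom_ext
        · simp only [funnyMap_inl, funnyMap_inr, funnyMap_inl_assoc, funnyMap_inr_assoc, funnyMap_left, pairArrow_left', pairArrow_right', pfst_left', pfst_right', psnd_left', psnd_right', parrowMap_left', parrowMap_right', mid4, assoc, comp_lift, lift_fst, lift_snd, lift_fst_assoc, lift_snd_assoc, tensorHom_comp_tensorHom, tensorHom_comp_tensorHom_assoc] <;> dsimp only [funny, parrow, Arrow.mk_left, Arrow.mk_right, Functor.id_obj] <;> simp [parrow, funny, funnyMap_inl_par, funnyMap_inr_par, funnyMap_inl_par_assoc, funnyMap_inr_par_assoc, funnyMap_inl, funnyMap_inr, funnyMap_inl_assoc, funnyMap_inr_assoc, funnyMap_left, pairArrow_left', pairArrow_right', pfst_left', pfst_right', psnd_left', psnd_right', parrowMap_left', parrowMap_right', mid4]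
          erw [funnyMap_inl_assoc (parrowMap fa fb) (parrowMap fc fd), funnyMap_inl (pfst a' b') (pfst c' d'),
            funnyMap_inl_assoc (pfst a b) (pfst c d), funnyMap_inl fa fc]
          erw [tensorHom_comp_tensorHom_assoc, tensorHom_comp_tensorHom_assoc, tensorHom_fst, tensorHom_fst]; rfl
        · simp only [funnyMap_inl, funnyMap_inr, funnyMap_inl_assoc, funnyMap_inr_assoc, funnyMap_left, pairArrow_left', pairArrow_right', pfst_left', pfst_right', psnd_left', psnd_right', parrowMap_left', parrowMap_right', mid4, assoc, comp_lift, lift_fst, lift_snd, lift_fst_assoc, lift_snd_assoc, tensorHom_comp_tensorHom, tensorHom_comp_tensorHom_assoc] <;> dsimp only [funny, parrow, Arrow.mk_left, Arrow.mk_right, Functor.id_obj] <;> simp [parrow, funny, funnyMap_inl_par, funnyMap_inr_par, funnyMap_inl_par_assoc, funnyMap_inr_par_assoc, funnyMap_inl, funnyMap_inr, funnyMap_inl_assoc, funnyMap_inr_assoc, funnyMap_left, pairArrow_left', pairArrow_right', pfst_left', pfst_right', psnd_left', psnd_right', parrowMap_left', parrowMap_right', mid4]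
          erw [funnyMap_inl_assoc (parrowMap fa fb) (parrowMap fc fd), funnyMap_inl (psnd a' b') (psnd c' d'),
            funnyMap_inl_assoc (psnd a b) (psnd c d), funnyMap_inl fb fd]
          erw [tensorHom_comp_tensorHom_assoc, tensorHom_comp_tensorHom_assoc, tensorHom_snd, tensorHom_snd]; rfl
      · apply CartesianMonoidalCategory.hom_ext
        · simp only [funnyMap_inl, funnyMap_inr, funnyMap_inl_assoc, funnyMap_inr_assoc, funnyMap_left, pairArrow_left', pairArrow_right', pfst_left', pfst_right', psnd_left', psnd_right', parrowMap_left', parrowMap_right', mid4, assoc, comp_lift, lift_fst, lift_snd, lift_fst_assoc, lift_snd_assoc, tensorHom_comp_tensorHom, tensorHom_comp_tensorHom_assoc] <;> dsimp only [funny, parrow, Arrow.mk_left, Arrow.mk_right, Functor.id_obj] <;> simp [parrow, funny, funnyMap_inl_par, funnyMap_inr_par, funnyMap_inl_par_assoc, funnyMap_inr_par_assoc, funnyMap_inl, funnyMap_inr, funnyMap_inl_assoc, funnyMap_inr_assoc, funnyMap_left, pairArrow_left', pairArrow_right', pfst_left', pfst_right', psnd_left', psnd_right', parrowMap_left', parrowMap_right',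 mid4]
          erw [funnyMap_inr_assoc (parrowMap fa fb) (parrowMap fc fd), funnyMap_inr (pfst a' b') (pfst c' d'),
            funnyMap_inr_assoc (pfst a b) (pfst c d), funnyMap_inr fa fc]
          erw [tensorHom_comp_tensorHom_assoc, tensorHom_comp_tensorHom_assoc, tensorHom_fst, tensorHom_fst]; rfl
        · simp only [funnyMap_inl, funnyMap_inr, funnyMap_inl_assoc, funnyMap_inr_assoc, funnyMap_left, pairArrow_left', pairArrow_right', pfst_left', pfst_right', psnd_left', psnd_right', parrowMap_left', parrowMap_right', mid4, assoc, comp_lift, lift_fst, lift_snd, lift_fst_assoc, lift_snd_assoc, tensorHom_comp_tensorHom, tensorHom_comp_tensorHom_assoc] <;> dsimp only [funny, parrow, Arrow.mk_left, Arrow.mk_right, Functor.id_obj] <;> simp [parrow, funny, funnyMap_inl_par, funnyMap_inr_par, funnyMap_inl_par_assoc, funnyMap_inr_par_assoc, funnyMap_inl, funnyMap_inr, funnyMap_inl_assoc, funnyMap_inr_assoc, funnyMap_left, pairArrow_left', pairArrow_right', pfst_left', pfst_right', psnd_left', psnd_right', parrowMap_left', parrowMap_right', mid4]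
          erw [funnyMap_inr_assoc (parrowMap fa fb) (parrowMap fc fd), funnyMap_inr (psnd a' b') (psnd c' d'),
            funnyMap_inr_assoc (psnd a b) (psnd c d), funnyMap_inr fb fd]
          erw [tensorHom_comp_tensorHom_assoc, tensorHom_comp_tensorHom_assoc, tensorHom_snd, tensorHom_snd]; rfl
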